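/- The inverse profile function φ = Φ⁻¹ satisfies the ODE φ'(t) = √(2(W(φ(t))+ε))/ε on (0, Φ(u⁺)), where Φ(t) = ∫_{u⁻}^{t} ε/√(2(W(s)+ε)) ds and W(s) = (s-u⁻)²(s-u⁺)². -/

import Mathlib

theorem stmt_17 (um up : ℝ) (h : um < up) (ε : ℝ) (hε : 0 < ε)
    (W : ℝ → ℝ) (hW : ∀ s, W s = (s - um)^2 * (s - up)^2)
    (Φ : ℝ → ℝ)
    (hΦ : ∀ t, Φ t = ∫ s in um..t, ε / Real.sqrt (2 * (W s + ε)))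
    (φ : ℝ → ℝ)
    (hmaps : ∀ y ∈ Set.Icc 0 (Φ up), φ y ∈ Set.Icc um up)
    (hleft : ∀ t ∈ Set.Icc um up, φ (Φ t) = t)
    (hright : ∀ y ∈ Set.Icc 0 (Φ up), Φ (φ y) = y) :
    ∀ t ∈ Set.Ioo 0 (Φ up),
      HasDerivAt φ (Real.sqrt (2 * (W (φ t) + ε)) / ε) t := by
  set f : ℝ → ℝ := fun s => ε / Real.sqrt (2 * (W s + ε)) with hf
  have hWpos : ∀ s, 0 < 2 * (W s + ε) := by
    intro s
    have : 0 ≤ W s := by rw [hW]; positivity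
    nlinarith
  have hsq : ∀ s, 0 < Real.sqrt (2 * (W s + ε)) := fun s =>
    Real.sqrt_pos.mpr (hWpos s)
  have hfpos : ∀ s, 0 < f s := fun s => div_pos hε (hsq s)
  have hWc : Continuous W := by
    have : W = fun s => (s - um)^2 * (s - up)^2 := funext hW
    rw [this]; continuity
  have hfc : Continuous f := by
    apply Continuous.div continuous_const
    · exact (continuous_const.mul (hWc.add continuous_const)).sqrt
    · intro s; exact (hsq s).ne'
  have hΦd : ∀ x, HasDerivAt Φ (f x) x := by
    intro x
    have hint : HasDerivAt (fun u => ∫ s in um..u, f s) (f x) x :=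
      intervalIntegral.integral_hasDerivAt_right (hfc.intervalIntegrable _ _)
        (hfc.stronglyMeasurableAtFilter _ _) hfc.continuousAt
    have hfe : Φ = fun u => ∫ s in um..u, f s := funext hΦ
    rw [hfe]; exact hint
  have hΦsm : StrictMono Φ :=
    strictMono_of_deriv_pos (fun x => by rw [(hΦd x).deriv]; exact hfpos x)
  have hΦum : Φ um = 0 := by rw [hΦ um, intervalIntegral.integral_same]
  intro t ht
  have htIcc : t ∈ Set.Icc 0 (Φ up) := Set.mem_Icc_of_Ioo ht
  have hφt : φ t ∈ Set.Icc um up := hmaps t htIcc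
  have hΦφt : Φ (φ t) = t := hright t htIcc
  have hφtIoo : φ t ∈ Set.Ioo um up := by
    rcases hφt with ⟨h1, h2⟩
    constructor
    · rcases lt_or_eq_of_le h1 with h' | h'
      · exact h'
      · exfalso; rw [← h', hΦum] at hΦφt; exact ht.1.ne hΦφt
    · rcases lt_or_eq_of_le h2 with h' | h'
      · exact h'
      · exfalso; rw [h'] at hΦφt; exact ht.2.ne' hΦφt
  -- monotonicity of φ on Icc
  have hφmono : MonotoneOn φ (Set.Icc 0 (Φ up)) := by
    intro a ha b hb hab
    have : Φ (φ a) ≤ Φ (φ b) := by rw [hright a ha, hright b hb]; exact hab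
    exact hΦsm.le_iff_le.mp this
  -- surjectivity of φ onto Icc um up
  have hsurj : Set.Icc um up ⊆ φ '' Set.Icc 0 (Φ up) := by
    intro x hx
    have hΦx : Φ x ∈ Set.Icc 0 (Φ up) := by
      constructor
      · rw [← hΦum]; exact hΦsm.monotone hx.1
      · exact hΦsm.monotone hx.2
    exact ⟨Φ x, hΦx, hleft x hx⟩
  have hcont : ContinuousAt φ t := by
    apply continuousAt_of_monotoneOn_of_image_mem_nhds hφmono
    · exact Icc_mem_nhds ht.1 ht.2
    · exact Filter.mem_of_superset (Ioo_mem_nhds hφtIoo.1 hφtIoo.2)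
        ((Set.Ioo_subset_Icc_self.trans hsurj))
  have hev : ∀ᶠ y in nhds t, Φ (φ y) = y := by
    filter_upwards [Ioo_mem_nhds ht.1 ht.2] with y hy
    exact hright y (Set.mem_Icc_of_Ioo hy)
  have := HasDerivAt.of_local_left_inverse hcont (hΦd (φ t)) (hfpos (φ t)).ne' hev
  convert this using 1
  case e'_4 => rfl
  rw [hf]
  field_simp
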